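/- arXiv:0803.1541 — 5 statements merged into one kernel-verified Lean document; each statement's English description precedes it below -/
import Mathlib

section
/- Let Y be a set carrying two metrics d₁ and d₂ such that both (Y, d₁) and (Y, d₂) are compact geodesic metric spaces, let M > 0, and let d_ℓ¹ and d_ℓ² be the induced length metrics on X_M = Y × (0, M] built from the Balogh–Schramm distances ρ₁ and ρ₂ of d₁ and d₂ respectively. Then d_ℓ¹ and d_ℓ² are rough-isometric (there exists c ≥ 0 with |d_ℓ¹(x,y) − d_ℓ²(x,y)| ≤ c for all x, y) if and only if d₁ and d₂ are bi-Lipschitzly equivalent (there exists K ≥ 1 with (1/K)·d₁(p,q) ≤ d₂(p,q) ≤ K·d₁(p,q) for all p, q ∈ Y). -/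
/-!
A path in `X_M` is at least as long as the Balogh–Schramm distance `ρ` of its endpoints, since
`ρ` satisfies the triangle inequality. Conversely, going up from `(p, s)` to height
`h = min M (d(p, q) + max s t)`, along a geodesic at that height and down to `(q, t)` costs at
most `ρ + 2 + 2 diam(Y) / M`. So for compact geodesic `Y` each length metric is within a bounded
distance of its `ρ`, and it suffices to compare `ρ₁` with `ρ₂`. For points at heights `s, t`
with `m = max s t`, `ρ₁ - ρ₂ = 2 log ((d₁ + m) / (d₂ + m))`: this is bounded by `2 log K` if
`d₁, d₂` are `K`-bi-Lipschitz, and letting `m → 0` a bound `c` gives `d₁ ≤ e^(c/2) d₂`.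
-/

open Set

/-- The Balogh–Schramm distance on `Y × (0, ∞)`:
`ρ((p,s),(q,t)) = 2·log((d_Y(p,q) + max(s,t))/√(s·t))`. -/
noncomputable def BS {Y : Type*} [MetricSpace Y] (x y : Y × ℝ) : ℝ :=
  2 * Real.log ((dist x.1 y.1 + max x.2 y.2) / Real.sqrt (x.2 * y.2))

/-- Length of the map `γ` over the set `S` with respect to the distance
function `d`: the supremum over finite monotone partitions in `S` of the sums
of consecutive distances (as in Mathlib's `eVariationOn`). -/
noncomputable def lengthOn {X : Type*} (d : X → X → ℝ) (γ : ℝ → X) (S : Set ℝ) : ENNReal :=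
  ⨆ p : ℕ × { u : ℕ → ℝ // Monotone u ∧ ∀ i, u i ∈ S },
    ∑ i ∈ Finset.range p.1, ENNReal.ofReal (d (γ (p.2.1 i)) (γ (p.2.1 (i + 1))))

/-- Membership in `X_M = Y × (0, M]`. -/
def inXM {Y : Type*} (M : ℝ) (x : Y × ℝ) : Prop := 0 < x.2 ∧ x.2 ≤ M

/-- The induced length metric on `X_M = Y × (0, M]`: the infimum of
Balogh–Schramm lengths of continuous paths joining `x` and `y` inside `X_M`. -/
noncomputable def dLen {Y : Type*} [MetricSpace Y] (M : ℝ) (x y : Y × ℝ) : ℝ :=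
  (sInf {L : ENNReal | ∃ (a b : ℝ) (γ : ℝ → Y × ℝ), a ≤ b ∧
      ContinuousOn γ (Icc a b) ∧ γ a = x ∧ γ b = y ∧
      (∀ t ∈ Icc a b, inXM M (γ t)) ∧
      lengthOn (BS (Y := Y)) γ (Icc a b) = L}).toReal

/-- A metric space is geodesic: any two points are joined by an isometric
embedding of `[0, dist p q]`. -/
def GeodesicSpace (Y : Type*) [MetricSpace Y] : Prop :=
  ∀ p q : Y, ∃ α : ℝ → Y, α 0 = p ∧ α (dist p q) = q ∧
    ∀ s ∈ Icc (0:ℝ) (dist p q), ∀ t ∈ Icc (0:ℝ) (dist p q), dist (α s) (α t) = |s - t|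

open Filter Topology

section BaloghSchramm

variable {Y : Type*} [MetricSpace Y]

lemma dist_add_max_pos {x : Y × ℝ} (hx : 0 < x.2) (y : Y × ℝ) :
    0 < dist x.1 y.1 + max x.2 y.2 :=
  add_pos_of_nonneg_of_pos dist_nonneg (lt_max_of_lt_left hx)

lemma BS_eq_log {x y : Y × ℝ} (hx : 0 < x.2) (hy : 0 < y.2) :
    BS x y = 2 * Real.log (dist x.1 y.1 + max x.2 y.2) - Real.log x.2 - Real.log y.2 := by
  rw [BS, Real.log_div (dist_add_max_pos hx y).ne' (Real.sqrt_pos.2 (mul_pos hx hy)).ne',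
    Real.log_sqrt (mul_pos hx hy).le, Real.log_mul hx.ne' hy.ne']
  ring

lemma BS_nonneg {x y : Y × ℝ} (hx : 0 < x.2) (hy : 0 < y.2) : 0 ≤ BS x y := by
  have hm : 0 < max x.2 y.2 := lt_max_of_lt_left hx
  have h₁ := Real.log_le_log hx (le_max_left x.2 y.2)
  have h₂ := Real.log_le_log hy (le_max_right x.2 y.2)
  have h₃ := Real.log_le_log hm (le_add_of_nonneg_left (dist_nonneg (x := x.1) (y := y.1)))
  rw [BS_eq_log hx hy]
  linarith

lemma max_mul_le_max_mul_max {a b c : ℝ} (hb : 0 ≤ b) (hc : 0 ≤ c) :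
    max a c * b ≤ max a b * max b c := by
  have hab : 0 ≤ max a b := le_max_of_le_right hb
  rcases le_total a c with h | h
  · rw [max_eq_right h, mul_comm]
    exact mul_le_mul (le_max_right a b) (le_max_right b c) hc hab
  · rw [max_eq_left h]
    exact mul_le_mul (le_max_left a b) (le_max_left b c) hb hab

lemma BS_triangle {x y z : Y × ℝ} (hx : 0 < x.2) (hy : 0 < y.2) (hz : 0 < z.2) :
    BS x z ≤ BS x y + BS y z := by
  have key : (dist x.1 z.1 + max x.2 z.2) * y.2 ≤
      (dist x.1 y.1 + max x.2 y.2) * (dist y.1 z.1 + max y.2 z.2) := by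
    have := max_mul_le_max_mul_max (a := x.2) hy.le hz.le
    have := mul_le_mul_of_nonneg_right (dist_triangle x.1 y.1 z.1) hy.le
    nlinarith [le_max_right x.2 y.2, le_max_left y.2 z.2, dist_nonneg (x := x.1) (y := y.1),
      dist_nonneg (x := y.1) (y := z.1)]
  have hlog := Real.log_le_log (mul_pos (dist_add_max_pos hx z) hy) key
  rw [Real.log_mul (dist_add_max_pos hx z).ne' hy.ne',
    Real.log_mul (dist_add_max_pos hx y).ne' (dist_add_max_pos hy z).ne'] at hlog
  rw [BS_eq_log hx hz, BS_eq_log hx hy, BS_eq_log hy hz]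
  linarith

lemma BS_same_fst_exp (p : Y) (a b : ℝ) :
    BS (p, Real.exp a) (p, Real.exp b) = |a - b| := by
  rw [BS_eq_log (Real.exp_pos a) (Real.exp_pos b), dist_self, zero_add]
  rcases le_total a b with h | h
  · rw [max_eq_right (Real.exp_le_exp.2 h), abs_of_nonpos (sub_nonpos.2 h)]
    simp only [Real.log_exp]
    ring
  · rw [max_eq_left (Real.exp_le_exp.2 h), abs_of_nonneg (sub_nonneg.2 h)]
    simp only [Real.log_exp]
    ring

lemma BS_same_snd_le (p q : Y) {h : ℝ} (hh : 0 < h) :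
    BS (p, h) (q, h) ≤ 2 * dist p q / h := by
  have hlog := Real.log_le_sub_one_of_pos (show 0 < (dist p q + h) / h by positivity)
  rw [Real.log_div (by positivity) hh.ne', add_div, div_self hh.ne'] at hlog
  rw [BS_eq_log hh hh]
  simp only [max_self]
  linarith [mul_div_assoc 2 (dist p q) h]

end BaloghSchramm

noncomputable def ramp (r : ℝ) : ℝ := projIcc 0 1 zero_le_one r

lemma ramp_of_nonpos {r : ℝ} (hr : r ≤ 0) : ramp r = 0 := by
  simp [ramp, projIcc_of_le_left _ hr]

lemma ramp_of_one_le {r : ℝ} (hr : 1 ≤ r) : ramp r = 1 := by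
  simp [ramp, projIcc_of_right_le _ hr]

lemma ramp_of_mem_Icc {r : ℝ} (hr : r ∈ Icc 0 1) : ramp r = r := by
  simp [ramp, projIcc_of_mem _ hr]

lemma ramp_mem_Icc (r : ℝ) : ramp r ∈ Icc 0 1 := (projIcc 0 1 zero_le_one r).2

lemma monotone_ramp : Monotone ramp := fun _ _ h => monotone_projIcc zero_le_one h

@[fun_prop]
lemma continuous_ramp : Continuous ramp := continuous_subtype_val.comp continuous_projIcc

section LengthOn

variable {X : Type*} (d : X → X → ℝ) (γ : ℝ → X)

def ControlledOn (f : ℝ → ℝ) (S : Set ℝ) : Prop :=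
  ∀ u ∈ S, ∀ v ∈ S, u ≤ v → d (γ u) (γ v) ≤ f v - f u

variable {d γ}

lemma ControlledOn.Icc_union {f : ℝ → ℝ} {a b c : ℝ}
    (htri : ∀ u v w, d (γ u) (γ w) ≤ d (γ u) (γ v) + d (γ v) (γ w))
    (h₁ : ControlledOn d γ f (Icc a b)) (h₂ : ControlledOn d γ f (Icc b c)) :
    ControlledOn d γ f (Icc a c) := by
  intro u hu v hv huv
  rcases le_total v b with hvb | hbv
  · exact h₁ u ⟨hu.1, huv.trans hvb⟩ v ⟨hu.1.trans huv, hvb⟩ huv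
  rcases le_total b u with hbu | hub
  · exact h₂ u ⟨hbu, huv.trans hv.2⟩ v ⟨hbu.trans huv, hv.2⟩ huv
  calc d (γ u) (γ v) ≤ d (γ u) (γ b) + d (γ b) (γ v) := htri u b v
    _ ≤ (f b - f u) + (f v - f b) := add_le_add
        (h₁ u ⟨hu.1, hub⟩ b ⟨hu.1.trans hub, le_rfl⟩ hub)
        (h₂ b ⟨le_rfl, hbv.trans hv.2⟩ v ⟨hbv, hv.2⟩ hbv)
    _ = f v - f u := by ring

lemma lengthOn_le_of_controlledOn {f : ℝ → ℝ} {a b : ℝ} (hab : a ≤ b)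
    (hf : MonotoneOn f (Icc a b)) (h : ControlledOn d γ f (Icc a b)) :
    lengthOn d γ (Icc a b) ≤ ENNReal.ofReal (f b - f a) := by
  refine iSup_le fun ⟨n, u, hu, hmem⟩ => ?_
  have hstep : ∀ i, 0 ≤ f (u (i + 1)) - f (u i) :=
    fun i => sub_nonneg.2 (hf (hmem i) (hmem (i + 1)) (hu i.le_succ))
  calc ∑ i ∈ Finset.range n, ENNReal.ofReal (d (γ (u i)) (γ (u (i + 1))))
      ≤ ∑ i ∈ Finset.range n, ENNReal.ofReal (f (u (i + 1)) - f (u i)) :=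
        Finset.sum_le_sum fun i _ =>
          ENNReal.ofReal_le_ofReal (h _ (hmem i) _ (hmem (i + 1)) (hu i.le_succ))
    _ = ENNReal.ofReal (f (u n) - f (u 0)) := by
        rw [← ENNReal.ofReal_sum_of_nonneg fun i _ => hstep i,
          Finset.sum_range_sub (fun i => f (u i))]
    _ ≤ ENNReal.ofReal (f b - f a) := by
        have := hf (hmem n) (right_mem_Icc.2 hab) (hmem n).2
        have := hf (left_mem_Icc.2 hab) (hmem 0) (hmem 0).1
        exact ENNReal.ofReal_le_ofReal (by linarith)

variable (d γ) in
lemma ofReal_le_lengthOn {a b : ℝ} (hab : a ≤ b) :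
    ENNReal.ofReal (d (γ a) (γ b)) ≤ lengthOn d γ (Icc a b) := by
  let u : ℕ → ℝ := fun i => if i = 0 then a else b
  have hu : Monotone u := fun i j hij => by
    rcases Nat.eq_zero_or_pos i with rfl | hi
    · by_cases hj : j = 0 <;> simp [u, hj, hab]
    · simp [u, hi.ne', (hi.trans_le hij).ne']
  have hmem : ∀ i, u i ∈ Icc a b := fun i => by
    by_cases hi : i = 0 <;> simp [u, hi, hab]
  calc ENNReal.ofReal (d (γ a) (γ b))
      = ∑ i ∈ Finset.range 1, ENNReal.ofReal (d (γ (u i)) (γ (u (i + 1)))) := by simp [u]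
    _ ≤ lengthOn d γ (Icc a b) :=
        le_iSup (fun p : ℕ × { u : ℕ → ℝ // Monotone u ∧ ∀ i, u i ∈ Icc a b } =>
          ∑ i ∈ Finset.range p.1, ENNReal.ofReal (d (γ (p.2.1 i)) (γ (p.2.1 (i + 1)))))
          (1, ⟨u, hu, hmem⟩)

end LengthOn

section Detour

variable {Y : Type*} (α : ℝ → Y) (d s t h : ℝ)

/-- Up from `(α 0, s)` to height `h` over `[0, 1]`, along `α` at height `h` over `[1, 2]`, down to
`(α d, t)` over `[2, 3]`; the vertical legs are linear in `log` of the height. -/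
noncomputable def detourPath (r : ℝ) : Y × ℝ :=
  (α (d * ramp (r - 1)), Real.exp (Real.log s + (Real.log h - Real.log s) * ramp r -
    (Real.log h - Real.log t) * ramp (r - 2)))

noncomputable def detourBound (r : ℝ) : ℝ :=
  (Real.log h - Real.log s) * ramp r + 2 * d / h * ramp (r - 1) +
    (Real.log h - Real.log t) * ramp (r - 2)

variable {α d s t h}

lemma monotone_detourBound (hd : 0 ≤ d) (hsh : Real.log s ≤ Real.log h)
    (hth : Real.log t ≤ Real.log h) (hh : 0 ≤ h) : Monotone (detourBound d s t h) :=
  fun u v huv => by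
    have := monotone_ramp huv
    have := monotone_ramp (sub_le_sub_right huv 1)
    have := monotone_ramp (sub_le_sub_right huv 2)
    simp only [detourBound]
    gcongr

lemma detourBound_three_sub_zero :
    detourBound d s t h 3 - detourBound d s t h 0 =
      (Real.log h - Real.log s) + 2 * d / h + (Real.log h - Real.log t) := by
  norm_num [detourBound, ramp_of_nonpos, ramp_of_one_le]

lemma detourPath_zero (hs : 0 < s) : detourPath α d s t h 0 = (α 0, s) := by
  simp [detourPath, ramp_of_nonpos, Real.exp_log hs]

lemma detourPath_three (ht : 0 < t) : detourPath α d s t h 3 = (α d, t) := by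
  norm_num [detourPath, ramp_of_one_le, Real.exp_log ht]

lemma detourPath_snd_le (hh : 0 < h) (hsh : Real.log s ≤ Real.log h)
    (hth : Real.log t ≤ Real.log h) (r : ℝ) :
    (detourPath α d s t h r).2 ≤ h := by
  refine (Real.exp_le_exp.2 ?_).trans (Real.exp_log hh).le
  have := (ramp_mem_Icc r).2
  have := (ramp_mem_Icc (r - 2)).1
  nlinarith

variable [MetricSpace Y]

lemma continuous_detourPath (hα : ContinuousOn α (Icc 0 d)) (hd : 0 ≤ d) :
    Continuous (detourPath α d s t h) :=
  (hα.comp_continuous (by fun_prop) fun r =>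
    ⟨mul_nonneg hd (ramp_mem_Icc _).1, mul_le_of_le_one_right hd (ramp_mem_Icc _).2⟩).prodMk
      (by fun_prop)

lemma controlledOn_detourPath_up (hsh : Real.log s ≤ Real.log h) :
    ControlledOn BS (detourPath α d s t h) (detourBound d s t h) (Icc 0 1) := by
  have hγ : ∀ r ∈ Icc (0 : ℝ) 1,
      detourPath α d s t h r = (α 0, Real.exp (Real.log s + (Real.log h - Real.log s) * r)) ∧
        detourBound d s t h r = (Real.log h - Real.log s) * r := fun r hr => by
    simp [detourPath, detourBound, ramp_of_mem_Icc hr, ramp_of_nonpos (by linarith [hr.2] : r - 1 ≤ 0),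
      ramp_of_nonpos (by linarith [hr.2] : r - 2 ≤ 0)]
  intro u hu v hv huv
  rw [(hγ u hu).1, (hγ v hv).1, (hγ u hu).2, (hγ v hv).2, BS_same_fst_exp,
    abs_of_nonpos (by nlinarith)]
  exact le_of_eq (by ring)

lemma controlledOn_detourPath_across
    (hα : ∀ u ∈ Icc 0 d, ∀ v ∈ Icc 0 d, dist (α u) (α v) = |u - v|) (hd : 0 ≤ d) (hh : 0 < h) :
    ControlledOn BS (detourPath α d s t h) (detourBound d s t h) (Icc 1 2) := by
  have hγ : ∀ r ∈ Icc (1 : ℝ) 2, detourPath α d s t h r = (α (d * (r - 1)), h) ∧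
      detourBound d s t h r = Real.log h - Real.log s + 2 * d / h * (r - 1) := fun r hr => by
    simp [detourPath, detourBound, ramp_of_one_le hr.1,
      ramp_of_mem_Icc (⟨by linarith [hr.1], by linarith [hr.2]⟩ : r - 1 ∈ Icc (0 : ℝ) 1),
      ramp_of_nonpos (by linarith [hr.2] : r - 2 ≤ 0), Real.exp_log hh]
  have hmem : ∀ r ∈ Icc (1 : ℝ) 2, d * (r - 1) ∈ Icc 0 d := fun r hr =>
    ⟨mul_nonneg hd (by linarith [hr.1]), mul_le_of_le_one_right hd (by linarith [hr.2])⟩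
  intro u hu v hv huv
  rw [(hγ u hu).1, (hγ v hv).1, (hγ u hu).2, (hγ v hv).2]
  refine (BS_same_snd_le _ _ hh).trans_eq ?_
  rw [hα _ (hmem u hu) _ (hmem v hv), abs_of_nonpos (by nlinarith)]
  ring

lemma controlledOn_detourPath_down (hth : Real.log t ≤ Real.log h) :
    ControlledOn BS (detourPath α d s t h) (detourBound d s t h) (Icc 2 3) := by
  have hγ : ∀ r ∈ Icc (2 : ℝ) 3,
      detourPath α d s t h r = (α d, Real.exp (Real.log h - (Real.log h - Real.log t) * (r - 2))) ∧
        detourBound d s t h r = Real.log h - Real.log s + 2 * d / h +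
          (Real.log h - Real.log t) * (r - 2) := fun r hr => by
    simp [detourPath, detourBound, ramp_of_one_le (by linarith [hr.1] : 1 ≤ r),
      ramp_of_one_le (by linarith [hr.1] : 1 ≤ r - 1),
      ramp_of_mem_Icc (⟨by linarith [hr.1], by linarith [hr.2]⟩ : r - 2 ∈ Icc (0 : ℝ) 1)]
  intro u hu v hv huv
  rw [(hγ u hu).1, (hγ v hv).1, (hγ u hu).2, (hγ v hv).2, BS_same_fst_exp,
    abs_of_nonneg (by nlinarith)]
  exact le_of_eq (by ring)

end Detour

def pathLengths {Y : Type*} [MetricSpace Y] (M : ℝ) (x y : Y × ℝ) : Set ENNReal :=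
  {L : ENNReal | ∃ (a b : ℝ) (γ : ℝ → Y × ℝ), a ≤ b ∧
      ContinuousOn γ (Icc a b) ∧ γ a = x ∧ γ b = y ∧
      (∀ t ∈ Icc a b, inXM M (γ t)) ∧
      lengthOn (BS (Y := Y)) γ (Icc a b) = L}

section LengthMetric

variable {Y : Type*} [MetricSpace Y] {M : ℝ}

lemma GeodesicSpace.exists_pathLengths_le (hg : GeodesicSpace Y) (p q : Y) {s t h : ℝ}
    (hs : 0 < s) (ht : 0 < t) (hsh : s ≤ h) (hth : t ≤ h) (hhM : h ≤ M) :
    ∃ L ∈ pathLengths M (p, s) (q, t), L ≤ ENNReal.ofReal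
      ((Real.log h - Real.log s) + 2 * dist p q / h + (Real.log h - Real.log t)) := by
  obtain ⟨α, hα0, hαd, hα⟩ := hg p q
  have hh : 0 < h := hs.trans_le hsh
  have hd : 0 ≤ dist p q := dist_nonneg
  have hsh' := Real.log_le_log hs hsh
  have hth' := Real.log_le_log ht hth
  have hαc : ContinuousOn α (Icc 0 (dist p q)) :=
    (LipschitzOnWith.of_dist_le_mul (K := 1) fun u hu v hv => by
      simp [hα u hu v hv, Real.dist_eq]).continuousOn
  set γ := detourPath α (dist p q) s t h
  have htri : ∀ u v w, BS (γ u) (γ w) ≤ BS (γ u) (γ v) + BS (γ v) (γ w) :=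
    fun u v w => BS_triangle (Real.exp_pos _) (Real.exp_pos _) (Real.exp_pos _)
  refine ⟨_, ⟨0, 3, γ, by norm_num,
    (continuous_detourPath hαc hd).continuousOn, by simp only [γ, detourPath_zero hs, hα0],
    by simp only [γ, detourPath_three ht, hαd],
    fun r _ => ⟨Real.exp_pos _, (detourPath_snd_le hh hsh' hth' r).trans hhM⟩, rfl⟩, ?_⟩
  rw [← detourBound_three_sub_zero]
  exact lengthOn_le_of_controlledOn (by norm_num)
    ((monotone_detourBound hd hsh' hth' hh.le).monotoneOn _)
    (((controlledOn_detourPath_up hsh').Icc_union htri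
      (controlledOn_detourPath_across hα hd hh)).Icc_union htri (controlledOn_detourPath_down hth'))

lemma GeodesicSpace.exists_pathLengths_le_BS_add (hg : GeodesicSpace Y) (hM : 0 < M) {D : ℝ}
    (hD : ∀ p q : Y, dist p q ≤ D) {x y : Y × ℝ} (hx : inXM M x) (hy : inXM M y) :
    ∃ L ∈ pathLengths M x y, L ≤ ENNReal.ofReal (BS x y + (2 + 2 * D / M)) := by
  obtain ⟨p, s⟩ := x
  obtain ⟨q, t⟩ := y
  obtain ⟨hs, hsM⟩ := hx
  obtain ⟨ht, htM⟩ := hy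
  set m := max s t
  have hm : 0 < m := lt_max_of_lt_left hs
  have hD0 : 0 ≤ D := dist_self p ▸ hD p p
  -- at height `dist p q + m` the horizontal leg costs at most `2` and the vertical legs match
  -- `BS`; capping the height at `M` costs at most `2 * D / M` more
  obtain ⟨L, hL, hLle⟩ := hg.exists_pathLengths_le p q (h := min M (dist p q + m)) hs ht
    (le_min hsM (le_add_of_nonneg_of_le dist_nonneg (le_max_left s t)))
    (le_min htM (le_add_of_nonneg_of_le dist_nonneg (le_max_right s t))) (min_le_left _ _)
  refine ⟨L, hL, hLle.trans (ENNReal.ofReal_le_ofReal ?_)⟩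
  rw [BS_eq_log hs ht]
  have h2D : 0 ≤ 2 * D / M := by positivity
  rcases le_total M (dist p q + m) with hle | hle
  · rw [min_eq_left hle]
    have := Real.log_le_log hM hle
    have : 2 * dist p q / M ≤ 2 * D / M := by gcongr; exact hD p q
    linarith
  · rw [min_eq_right hle]
    have : 2 * dist p q / (dist p q + m) ≤ 2 := by
      rw [div_le_iff₀ (by positivity)]
      linarith
    linarith

lemma dLen_le_of_exists_pathLengths_le {x y : Y × ℝ} {r : ℝ} (hr : 0 ≤ r)
    (h : ∃ L ∈ pathLengths M x y, L ≤ ENNReal.ofReal r) : dLen M x y ≤ r :=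
  let ⟨_, hL, hLr⟩ := h
  ENNReal.toReal_le_of_le_ofReal hr ((sInf_le hL).trans hLr)

lemma BS_le_dLen_of_exists_pathLengths_ne_top {x y : Y × ℝ}
    (h : ∃ L ∈ pathLengths M x y, L ≠ ⊤) : BS x y ≤ dLen M x y := by
  obtain ⟨L, hL, hLtop⟩ := h
  have hlow : ENNReal.ofReal (BS x y) ≤ sInf (pathLengths M x y) :=
    le_sInf fun _ ⟨a, b, γ, hab, _, ha, hb, _, hlen⟩ =>
      ha ▸ hb ▸ hlen ▸ ofReal_le_lengthOn BS γ hab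
  exact (ENNReal.ofReal_le_iff_le_toReal (ne_top_of_le_ne_top hLtop (sInf_le hL))).1 hlow

end LengthMetric

def RoughlyEqualOn {α : Type*} (P : α → Prop) (f g : α → α → ℝ) : Prop :=
  ∃ c : ℝ, 0 ≤ c ∧ ∀ x y, P x → P y → |f x y - g x y| ≤ c

namespace RoughlyEqualOn

variable {α : Type*} {P : α → Prop} {f g k : α → α → ℝ}

lemma symm (h : RoughlyEqualOn P f g) : RoughlyEqualOn P g f :=
  let ⟨c, hc, hfg⟩ := h
  ⟨c, hc, fun x y hx hy => abs_sub_comm (g x y) (f x y) ▸ hfg x y hx hy⟩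

lemma trans (h₁ : RoughlyEqualOn P f g) (h₂ : RoughlyEqualOn P g k) : RoughlyEqualOn P f k :=
  let ⟨c₁, hc₁, hfg⟩ := h₁
  let ⟨c₂, hc₂, hgk⟩ := h₂
  ⟨c₁ + c₂, add_nonneg hc₁ hc₂, fun x y hx hy =>
    (abs_sub_le _ _ _).trans (add_le_add (hfg x y hx hy) (hgk x y hx hy))⟩

lemma congr_iff {f' g' : α → α → ℝ} (hf : RoughlyEqualOn P f f') (hg : RoughlyEqualOn P g g') :
    RoughlyEqualOn P f g ↔ RoughlyEqualOn P f' g' :=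
  ⟨fun h => (hf.symm.trans h).trans hg, fun h => (hf.trans h).trans hg.symm⟩

end RoughlyEqualOn

lemma dLen_roughlyEqualOn_BS {Y : Type*} [MetricSpace Y] [CompactSpace Y] (hg : GeodesicSpace Y)
    {M : ℝ} (hM : 0 < M) : RoughlyEqualOn (inXM M) (dLen (Y := Y) M) BS := by
  set D := Metric.diam (univ : Set Y)
  have hD : ∀ p q : Y, dist p q ≤ D := fun p q =>
    Metric.dist_le_diam_of_mem isCompact_univ.isBounded (mem_univ p) (mem_univ q)
  have hc : 0 ≤ 2 + 2 * D / M := by have : 0 ≤ D := Metric.diam_nonneg; positivity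
  refine ⟨2 + 2 * D / M, hc, fun x y hx hy => ?_⟩
  have hpath := hg.exists_pathLengths_le_BS_add hM hD hx hy
  have hup := dLen_le_of_exists_pathLengths_le (add_nonneg (BS_nonneg hx.1 hy.1) hc) hpath
  have hlow := BS_le_dLen_of_exists_pathLengths_ne_top <|
    hpath.imp fun _ ⟨hL, hLr⟩ => ⟨hL, ne_top_of_le_ne_top ENNReal.ofReal_ne_top hLr⟩
  rw [abs_le]
  constructor <;> linarith

lemma abs_log_add_sub_log_add_le {a b m K : ℝ} (ha : 0 ≤ a) (hb : 0 ≤ b) (hm : 0 < m)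
    (hK : 1 ≤ K) (hab : a ≤ K * b) (hba : b ≤ K * a) :
    |Real.log (a + m) - Real.log (b + m)| ≤ Real.log K := by
  have key : ∀ a b : ℝ, 0 ≤ a → 0 ≤ b → a ≤ K * b →
      Real.log (a + m) - Real.log (b + m) ≤ Real.log K := fun a b ha hb hab => by
    have := Real.log_le_log (by positivity) (show a + m ≤ K * (b + m) by nlinarith)
    rw [Real.log_mul (by positivity) (by positivity)] at this
    linarith
  exact abs_sub_le_iff.2 ⟨key a b ha hb hab, key b a hb ha hba⟩

lemma le_exp_mul_of_forall_log_add_sub_le {a b c M : ℝ} (hM : 0 < M) (hb : 0 ≤ b)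
    (h : ∀ m ∈ Ioc 0 M, Real.log (a + m) - Real.log (b + m) ≤ c) :
    a ≤ Real.exp c * b := by
  have hev : ∀ᶠ m in 𝓝[>] (0 : ℝ), a + m ≤ Real.exp c * (b + m) := by
    filter_upwards [Ioc_mem_nhdsGT hM] with m hm
    calc a + m ≤ Real.exp (Real.log (a + m)) := Real.le_exp_log _
      _ ≤ Real.exp (c + Real.log (b + m)) := Real.exp_le_exp.2 (by linarith [h m hm])
      _ = Real.exp c * (b + m) := by rw [Real.exp_add, Real.exp_log (by linarith [hm.1])]
  have hlim : ∀ u : ℝ, Tendsto (fun m => u + m) (𝓝[>] 0) (𝓝 (u + 0)) := fun u =>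
    ((continuous_const.add continuous_id).tendsto 0).mono_left nhdsWithin_le_nhds
  simpa using le_of_tendsto_of_tendsto (hlim a) ((hlim b).const_mul (Real.exp c)) hev

section TwoMetrics

variable {Y : Type*} (m₁ m₂ : MetricSpace Y)

lemma BS_sub_BS {x y : Y × ℝ} (hx : 0 < x.2) (hy : 0 < y.2) :
    @BS Y m₁ x y - @BS Y m₂ x y =
      2 * (Real.log (@dist Y m₁.toDist x.1 y.1 + max x.2 y.2) -
        Real.log (@dist Y m₂.toDist x.1 y.1 + max x.2 y.2)) := by
  rw [@BS_eq_log Y m₁ x y hx hy, @BS_eq_log Y m₂ x y hx hy]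
  ring

lemma BS_roughlyEqualOn_iff {M : ℝ} (hM : 0 < M) :
    RoughlyEqualOn (inXM M) (@BS Y m₁) (@BS Y m₂) ↔
      ∃ K : ℝ, 1 ≤ K ∧ ∀ p q : Y,
        (1 / K) * @dist Y m₁.toDist p q ≤ @dist Y m₂.toDist p q ∧
          @dist Y m₂.toDist p q ≤ K * @dist Y m₁.toDist p q := by
  constructor
  · rintro ⟨c, hc, h⟩
    have hlog : ∀ p q : Y, ∀ m ∈ Ioc 0 M, |Real.log (@dist Y m₁.toDist p q + m) -
        Real.log (@dist Y m₂.toDist p q + m)| ≤ c / 2 := fun p q m hm => by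
      have := h (p, m) (q, m) hm hm
      rw [BS_sub_BS m₁ m₂ hm.1 hm.1, abs_mul, abs_two] at this
      simp only [max_self] at this
      linarith
    refine ⟨Real.exp (c / 2), Real.one_le_exp (by positivity), fun p q => ⟨?_, ?_⟩⟩
    · rw [one_div_mul_eq_div, div_le_iff₀' (Real.exp_pos _)]
      exact le_exp_mul_of_forall_log_add_sub_le hM (@dist_nonneg Y m₂.toPseudoMetricSpace p q)
        fun m hm => (abs_sub_le_iff.1 (hlog p q m hm)).1
    · exact le_exp_mul_of_forall_log_add_sub_le hM (@dist_nonneg Y m₁.toPseudoMetricSpace p q)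
        fun m hm => (abs_sub_le_iff.1 (hlog p q m hm)).2
  · rintro ⟨K, hK, h⟩
    refine ⟨2 * Real.log K, by have := Real.log_nonneg hK; positivity, fun x y hx hy => ?_⟩
    have h₁₂ : @dist Y m₁.toDist x.1 y.1 ≤ K * @dist Y m₂.toDist x.1 y.1 := by
      rw [← div_le_iff₀' (by positivity), ← one_div_mul_eq_div]
      exact (h x.1 y.1).1
    rw [BS_sub_BS m₁ m₂ hx.1 hy.1, abs_mul, abs_two]
    exact mul_le_mul_of_nonneg_left (abs_log_add_sub_log_add_le
      (@dist_nonneg Y m₁.toPseudoMetricSpace _ _) (@dist_nonneg Y m₂.toPseudoMetricSpace _ _)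
      (lt_max_of_lt_left hx.1) hK h₁₂ (h x.1 y.1).2) zero_le_two

end TwoMetrics

/-- for two compact geodesic metrics on `Y`, the induced length
metrics on `X_M = Y × (0, M]` are rough-isometric iff the two metrics on `Y`
are bi-Lipschitzly equivalent. -/
theorem stmt10 {Y : Type*} (m₁ m₂ : MetricSpace Y)
    (hc₁ : @CompactSpace Y m₁.toUniformSpace.toTopologicalSpace)
    (hc₂ : @CompactSpace Y m₂.toUniformSpace.toTopologicalSpace)
    (hg₁ : @GeodesicSpace Y m₁) (hg₂ : @GeodesicSpace Y m₂)
    {M : ℝ} (hM : 0 < M) :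
    (∃ c : ℝ, 0 ≤ c ∧ ∀ x y : Y × ℝ, inXM M x → inXM M y →
        |@dLen Y m₁ M x y - @dLen Y m₂ M x y| ≤ c) ↔
      (∃ K : ℝ, 1 ≤ K ∧ ∀ p q : Y,
        (1 / K) * @dist Y m₁.toDist p q ≤ @dist Y m₂.toDist p q ∧
          @dist Y m₂.toDist p q ≤ K * @dist Y m₁.toDist p q) :=
  ((@dLen_roughlyEqualOn_BS Y m₁ hc₁ hg₁ M hM).congr_iff
    (@dLen_roughlyEqualOn_BS Y m₂ hc₂ hg₂ M hM)).trans (BS_roughlyEqualOn_iff m₁ m₂ hM)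
end

section
/- Let (Y, d_Y) be a metric space with the Balogh–Schramm distance ρ on Y × (0, ∞). Fix p ∈ Y and 0 < a ≤ b. Then the 'vertical' path γ : [a², b²] → Y × (0, ∞), γ(t) = (p, √t), has ρ-length (eVariationOn) equal to log(b/a), which equals ρ((p,a),(p,b)); in particular γ is a geodesic segment up to reparametrization. -/
open Set

/-! Along a vertical line `ρ` is a difference of potentials, so every partition sum of the
path telescopes and the length is the total increase of the potential `t ↦ log √t`. -/

section Telescoping

variable {X : Type*} {d : X → X → ℝ} {γ : ℝ → X} {f : ℝ → ℝ} {S : Set ℝ}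

theorem lengthOn_eq_of_dist_eq_sub {x y : ℝ} (hx : IsLeast S x) (hy : IsGreatest S y)
    (hf : MonotoneOn f S) (hd : ∀ s ∈ S, ∀ t ∈ S, s ≤ t → d (γ s) (γ t) = f t - f s) :
    lengthOn d γ S = ENNReal.ofReal (f y - f x) := by
  apply le_antisymm
  · refine iSup_le fun ⟨n, u, hu, huS⟩ => ?_
    have hstep (i : ℕ) : d (γ (u i)) (γ (u (i + 1))) = f (u (i + 1)) - f (u i) :=
      hd _ (huS i) _ (huS (i + 1)) (hu i.le_succ)
    have hstep_nonneg (i : ℕ) : 0 ≤ f (u (i + 1)) - f (u i) :=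
      sub_nonneg.2 (hf (huS i) (huS (i + 1)) (hu i.le_succ))
    calc ∑ i ∈ Finset.range n, ENNReal.ofReal (d (γ (u i)) (γ (u (i + 1))))
        = ENNReal.ofReal (∑ i ∈ Finset.range n, (f (u (i + 1)) - f (u i))) := by
          simp only [hstep]
          exact (ENNReal.ofReal_sum_of_nonneg fun i _ => hstep_nonneg i).symm
      _ = ENNReal.ofReal (f (u n) - f (u 0)) := by rw [Finset.sum_range_sub (fun i => f (u i))]
      _ ≤ ENNReal.ofReal (f y - f x) := by
          have hlast : f (u n) ≤ f y := hf (huS n) hy.1 (hy.2 (huS n))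
          have hfirst : f x ≤ f (u 0) := hf hx.1 (huS 0) (hx.2 (huS 0))
          gcongr
  · have hxy : x ≤ y := hx.2 hy.1
    let u : ℕ → ℝ := fun i => if i = 0 then x else y
    have hu : Monotone u := monotone_nat_of_le_succ fun i => by
      simp only [u, Nat.succ_ne_zero, if_false]
      split_ifs
      exacts [hxy, le_rfl]
    have huS (i : ℕ) : u i ∈ S := by
      simp only [u]
      split_ifs
      exacts [hx.1, hy.1]
    refine le_trans (le_of_eq ?_) (le_iSup _ (1, ⟨u, hu, huS⟩))
    simp [u, hd x hx.1 y hy.1 hxy]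

end Telescoping

theorem BS_vertical {Y : Type*} [MetricSpace Y] (p : Y) {u v : ℝ} (hu : 0 < u) (huv : u ≤ v) :
    BS (p, u) (p, v) = Real.log v - Real.log u := by
  have hv : 0 < v := hu.trans_le huv
  rw [BS, dist_self, zero_add, max_eq_right huv, Real.log_div hv.ne' (by positivity),
    Real.log_sqrt (by positivity), Real.log_mul hu.ne' hv.ne']
  ring

/-- the vertical path `t ↦ (p, √t)` on `[a², b²]` has
Balogh–Schramm length `log(b/a)`, which equals `ρ((p,a),(p,b))`; in particular
it is a geodesic segment up to reparametrization. -/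
theorem stmt11 {Y : Type*} [MetricSpace Y] (p : Y) {a b : ℝ} (ha : 0 < a) (hab : a ≤ b) :
    lengthOn (BS (Y := Y)) (fun t => (p, Real.sqrt t)) (Icc (a ^ 2) (b ^ 2)) =
        ENNReal.ofReal (Real.log (b / a)) ∧
      Real.log (b / a) = BS (p, a) (p, b) := by
  have hlog : Real.log (b / a) = Real.log b - Real.log a :=
    Real.log_div (ha.trans_le hab).ne' ha.ne'
  have hpos {t : ℝ} (ht : t ∈ Icc (a ^ 2) (b ^ 2)) : 0 < t := (pow_pos ha 2).trans_le ht.1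
  refine ⟨?_, by rw [BS_vertical p ha hab, hlog]⟩
  have hab2 : a ^ 2 ≤ b ^ 2 := pow_le_pow_left₀ ha.le hab 2
  rw [lengthOn_eq_of_dist_eq_sub (f := fun t => Real.log (Real.sqrt t)) (isLeast_Icc hab2)
    (isGreatest_Icc hab2), Real.sqrt_sq ha.le, Real.sqrt_sq (ha.le.trans hab), hlog]
  · exact fun s hs t _ hst => Real.log_le_log (Real.sqrt_pos.2 (hpos hs)) (Real.sqrt_le_sqrt hst)
  · exact fun s hs t _ hst => BS_vertical p (Real.sqrt_pos.2 (hpos hs)) (Real.sqrt_le_sqrt hst)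
end

section
/- Let (Y, d_Y) be a metric space with the Balogh–Schramm distance ρ on Y × (0, ∞). Let L ≥ 0, let α : [0, L] → Y satisfy d_Y(α(t), α(t')) = |t − t'| for all t, t' ∈ [0, L] (a unit-speed geodesic segment), and fix s > 0. Then the 'horizontal' path γ : [0, L] → Y × (0, ∞), γ(t) = (α(t), s), has ρ-length (eVariationOn) equal to 2L/s. -/
/-!
Along a horizontal path the Balogh–Schramm distance is `2 log (1 + |t - t'| / s)`.
Since `log (1 + x) ≤ x`, every partition sum is at most `2/s` times the total parameter
increment, so the length is at most `2L/s`. Conversely, the uniform partition into `n` pieces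
has sum `2 n log (1 + L / (n s))`, which tends to `2L/s`.
-/

open Set

open Filter Topology

lemma BS_mk_mk_of_snd_eq {Y : Type*} [MetricSpace Y] (p q : Y) {s : ℝ} (hs : 0 < s) :
    BS (p, s) (q, s) = 2 * Real.log (1 + dist p q / s) := by
  simp only [BS, max_self, Real.sqrt_mul_self hs.le, add_div, div_self hs.ne', add_comm]

section lengthOn

variable {X : Type*} {d : X → X → ℝ} {γ : ℝ → X} {a b : ℝ}

lemma sum_le_lengthOn {S : Set ℝ} {u : ℕ → ℝ} (hu : Monotone u) (huS : ∀ i, u i ∈ S) (n : ℕ) :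
    ∑ i ∈ Finset.range n, ENNReal.ofReal (d (γ (u i)) (γ (u (i + 1)))) ≤ lengthOn d γ S :=
  le_iSup (fun p : ℕ × { u : ℕ → ℝ // Monotone u ∧ ∀ i, u i ∈ S } =>
    ∑ i ∈ Finset.range p.1, ENNReal.ofReal (d (γ (p.2.1 i)) (γ (p.2.1 (i + 1)))))
    ⟨n, u, hu, huS⟩

lemma lengthOn_Icc_le {C : ℝ} (hC : 0 ≤ C)
    (h : ∀ t ∈ Icc a b, ∀ t' ∈ Icc a b, t ≤ t' → d (γ t) (γ t') ≤ C * (t' - t)) :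
    lengthOn d γ (Icc a b) ≤ ENNReal.ofReal (C * (b - a)) := by
  refine iSup_le fun ⟨n, u, hu, huS⟩ => ?_
  have hstep : ∀ i, 0 ≤ C * (u (i + 1) - u i) :=
    fun i => mul_nonneg hC (sub_nonneg.2 (hu i.le_succ))
  calc ∑ i ∈ Finset.range n, ENNReal.ofReal (d (γ (u i)) (γ (u (i + 1))))
      ≤ ∑ i ∈ Finset.range n, ENNReal.ofReal (C * (u (i + 1) - u i)) :=
        Finset.sum_le_sum fun i _ =>
          ENNReal.ofReal_le_ofReal (h _ (huS i) _ (huS (i + 1)) (hu i.le_succ))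
    _ = ENNReal.ofReal (C * (u n - u 0)) := by
        rw [← ENNReal.ofReal_sum_of_nonneg fun i _ => hstep i, ← Finset.mul_sum,
          Finset.sum_range_sub]
    _ ≤ ENNReal.ofReal (C * (b - a)) := by
        have := (huS 0).1
        have := (huS n).2
        gcongr

lemma uniform_partition_mem_Icc (hab : a ≤ b) (n i : ℕ) :
    min (a + i * ((b - a) / n)) b ∈ Icc a b :=
  ⟨le_min (le_add_of_nonneg_right (by have := sub_nonneg.2 hab; positivity)) hab,
    min_le_right _ _⟩

lemma uniform_partition_eq {n i : ℕ} (hab : a ≤ b) (hi : i ≤ n) :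
    min (a + i * ((b - a) / n)) b = a + i * ((b - a) / n) := by
  refine min_eq_left ?_
  rcases Nat.eq_zero_or_pos n with rfl | hn
  · simpa using hab
  · have : (i : ℝ) * ((b - a) / n) ≤ n * ((b - a) / n) := by
      gcongr
    rw [mul_div_cancel₀ _ (by positivity)] at this
    linarith

lemma ofReal_natCast_mul_le_lengthOn_Icc {g : ℝ → ℝ} (hab : a ≤ b)
    (h : ∀ t ∈ Icc a b, ∀ t' ∈ Icc a b, d (γ t) (γ t') = g |t - t'|) (n : ℕ) :
    ENNReal.ofReal (n * g ((b - a) / n)) ≤ lengthOn d γ (Icc a b) := by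
  set u : ℕ → ℝ := fun i => min (a + i * ((b - a) / n)) b
  have hu : Monotone u := fun i j hij => by
    have := sub_nonneg.2 hab
    simp only [u]
    gcongr
  have hterm : ∀ i ∈ Finset.range n,
      ENNReal.ofReal (d (γ (u i)) (γ (u (i + 1)))) = ENNReal.ofReal (g ((b - a) / n)) := by
    intro i hi
    have hi := Finset.mem_range.1 hi
    rw [h _ (uniform_partition_mem_Icc hab n i) _ (uniform_partition_mem_Icc hab n (i + 1)),
      uniform_partition_eq hab hi.le, uniform_partition_eq hab hi, Nat.cast_succ,
      show a + i * ((b - a) / n) - (a + (i + 1) * ((b - a) / n)) = -((b - a) / n) by ring,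
      abs_neg, abs_of_nonneg (div_nonneg (sub_nonneg.2 hab) n.cast_nonneg)]
  calc ENNReal.ofReal (n * g ((b - a) / n))
      = ∑ i ∈ Finset.range n, ENNReal.ofReal (d (γ (u i)) (γ (u (i + 1)))) := by
        rw [Finset.sum_congr rfl hterm, Finset.sum_const, Finset.card_range, nsmul_eq_mul,
          ENNReal.ofReal_mul n.cast_nonneg, ENNReal.ofReal_natCast]
    _ ≤ lengthOn d γ (Icc a b) := sum_le_lengthOn hu (uniform_partition_mem_Icc hab n) n

end lengthOn

lemma tendsto_natCast_mul_two_mul_log_one_add_div (L s : ℝ) :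
    Tendsto (fun n : ℕ => n * (2 * Real.log (1 + (L / n) / s))) atTop (𝓝 (2 * L / s)) := by
  have := ((Real.tendsto_mul_log_one_add_div_atTop (L / s)).comp
    tendsto_natCast_atTop_atTop).const_mul 2
  rw [mul_div_assoc]
  refine this.congr fun n => ?_
  simp only [Function.comp_def, div_right_comm L _ s]
  ring

/-- the horizontal path `t ↦ (α(t), s)` over a unit-speed geodesic
segment `α : [0, L] → Y` has Balogh–Schramm length `2L/s`. -/
theorem stmt12 {Y : Type*} [MetricSpace Y] {L : ℝ} (hL : 0 ≤ L) (α : ℝ → Y)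
    (hα : ∀ t ∈ Icc (0:ℝ) L, ∀ t' ∈ Icc (0:ℝ) L, dist (α t) (α t') = |t - t'|)
    {s : ℝ} (hs : 0 < s) :
    lengthOn (BS (Y := Y)) (fun t => (α t, s)) (Icc (0:ℝ) L) =
      ENNReal.ofReal (2 * L / s) := by
  have hdist : ∀ t ∈ Icc (0:ℝ) L, ∀ t' ∈ Icc (0:ℝ) L,
      BS (α t, s) (α t', s) = 2 * Real.log (1 + |t - t'| / s) := fun t ht t' ht' => by
    rw [BS_mk_mk_of_snd_eq _ _ hs, hα t ht t' ht']
  apply le_antisymm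
  · have hle : ∀ t ∈ Icc (0:ℝ) L, ∀ t' ∈ Icc (0:ℝ) L, t ≤ t' →
        BS (α t, s) (α t', s) ≤ 2 / s * (t' - t) := fun t ht t' ht' htt' => by
      rw [hdist t ht t' ht', abs_sub_comm, abs_of_nonneg (sub_nonneg.2 htt')]
      calc 2 * Real.log (1 + (t' - t) / s)
          ≤ 2 * ((t' - t) / s) := by
            gcongr
            linarith [Real.log_le_sub_one_of_pos (x := 1 + (t' - t) / s) (by positivity)]
        _ = 2 / s * (t' - t) := by ring
    simpa [mul_div_right_comm] using lengthOn_Icc_le (by positivity) hle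
  · refine le_of_tendsto'
      (ENNReal.tendsto_ofReal (tendsto_natCast_mul_two_mul_log_one_add_div L s)) fun n => ?_
    simpa using ofReal_natCast_mul_le_lengthOn_Icc (γ := fun t => (α t, s))
      (g := fun x => 2 * Real.log (1 + x / s)) hL hdist n
end

section
/- Let (Y, d_Y) be a metric space with the Balogh–Schramm distance ρ on Y × (0, ∞). Let u > 0, let S ⊆ ℝ, and let γ : S → Y × (0, ∞), γ(t) = (α(t), h(t)), satisfy h(t) ≤ u for all t ∈ S. Then the ρ-length (eVariationOn) on S of the projected map t ↦ (α(t), u) is at most the ρ-length of γ on S. -/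
/-! The length is a supremum of sums of pointwise distances, so it suffices that each
Balogh–Schramm distance grows when the heights drop from `u` to `s, t ≤ u`; this holds because
`√(st) ≤ max(s,t) ≤ u` gives `(d + u)/u ≤ (d + max(s,t))/max(s,t) ≤ (d + max(s,t))/√(st)`. -/

open Set

theorem lengthOn_mono {X X' : Type*} {d : X → X → ℝ} {d' : X' → X' → ℝ} {γ : ℝ → X}
    {γ' : ℝ → X'} {S : Set ℝ} (hd : ∀ a ∈ S, ∀ b ∈ S, d (γ a) (γ b) ≤ d' (γ' a) (γ' b)) :
    lengthOn d γ S ≤ lengthOn d' γ' S :=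
  iSup_mono fun ⟨_, _, _, hmem⟩ => Finset.sum_le_sum fun i _ =>
    ENNReal.ofReal_le_ofReal (hd _ (hmem i) _ (hmem (i + 1)))

theorem Real.sqrt_mul_le_max {s t : ℝ} (hs : 0 ≤ s) (ht : 0 ≤ t) : Real.sqrt (s * t) ≤ max s t :=
  Real.sqrt_le_iff.2 ⟨le_max_of_le_left hs, (sq (max s t)).symm ▸
    mul_le_mul (le_max_left s t) (le_max_right s t) ht (le_max_of_le_left hs)⟩

theorem BS_le_BS_of_le {Y : Type*} [MetricSpace Y] (p q : Y) {s t u : ℝ} (hs : 0 < s)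
    (ht : 0 < t) (hsu : s ≤ u) (htu : t ≤ u) : BS (p, u) (q, u) ≤ BS (p, s) (q, t) := by
  set m := max s t
  have hm : 0 < m := lt_max_of_lt_left hs
  have hmu : m ≤ u := max_le hsu htu
  have hu : 0 < u := hm.trans_le hmu
  have hd : 0 ≤ dist p q := dist_nonneg
  have hratio : (dist p q + u) / u ≤ (dist p q + m) / Real.sqrt (s * t) :=
    calc (dist p q + u) / u = dist p q / u + 1 := by field_simp
      _ ≤ dist p q / m + 1 := by gcongr
      _ = (dist p q + m) / m := by field_simp
      _ ≤ (dist p q + m) / Real.sqrt (s * t) := by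
        gcongr
        exact Real.sqrt_mul_le_max hs.le ht.le
  unfold BS
  rw [max_self, Real.sqrt_mul_self hu.le]
  gcongr

theorem stmt14_general {Y : Type*} [MetricSpace Y] {u : ℝ} (S : Set ℝ)
    (α : ℝ → Y) (h : ℝ → ℝ) (hh : ∀ t ∈ S, 0 < h t ∧ h t ≤ u) :
    lengthOn (BS (Y := Y)) (fun t => (α t, u)) S ≤
      lengthOn (BS (Y := Y)) (fun t => (α t, h t)) S :=
  lengthOn_mono fun a ha b hb =>
    BS_le_BS_of_le _ _ (hh a ha).1 (hh b hb).1 (hh a ha).2 (hh b hb).2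

/-- projecting a path of `X_M` lying below height `u` to the
constant height `u` does not increase its Balogh–Schramm length. -/
theorem stmt14 {Y : Type*} [MetricSpace Y] {u : ℝ} (hu : 0 < u) (S : Set ℝ)
    (α : ℝ → Y) (h : ℝ → ℝ) (hh : ∀ t ∈ S, 0 < h t ∧ h t ≤ u) :
    lengthOn (BS (Y := Y)) (fun t => (α t, u)) S ≤
      lengthOn (BS (Y := Y)) (fun t => (α t, h t)) S :=
  stmt14_general S α h hh
end

section
/- Let (Y, d_Y) be a metric space with the Balogh–Schramm distance ρ on Y × (0, ∞). Let x = (p, s), y = (q, t), z = (r, u) be points of Y × (0, ∞) with s ≤ t, z ≠ x and z ≠ y. Then ρ(x,y) = ρ(x,z) + ρ(z,y) if and only if s ≤ u ≤ t and r = p. -/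
open Set

/-!
Since `√(su)·√(ut) = u·√(st)`, exponentiating turns `ρ(x,y) = ρ(x,z) + ρ(z,y)` into the
polynomial identity `(d(p,q) + t)·u = (d(p,r) + max(s,u))·(d(r,q) + max(u,t))`. The right side
exceeds the left when `u ∉ [s,t]`, and for `s ≤ u ≤ t` the difference is
`d(p,r)·d(r,q) + d(p,r)·(t - u) + (d(p,r) + d(r,q) - d(p,q))·u`, a sum of nonnegative terms,
which vanishes only if `r = p` or `(r,u) = (q,t)`.
-/

theorem le_le_and_of_mul_eq_add_max_mul_add_max {a b c s t u : ℝ} (ha : 0 ≤ a) (hb : 0 ≤ b)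
    (hc : c ≤ a + b) (hu : 0 < u) (hst : s ≤ t)
    (h : (c + t) * u = (a + max s u) * (b + max u t)) :
    s ≤ u ∧ u ≤ t ∧ (a = 0 ∨ b = 0 ∧ u = t) := by
  have hab : 0 ≤ a * b := mul_nonneg ha hb
  have hcu : 0 ≤ (a + b - c) * u := mul_nonneg (by linarith) hu.le
  rcases lt_or_ge u s with hus | hsu
  · rw [max_eq_left hus.le, max_eq_right (hus.trans_le hst).le] at h
    nlinarith [mul_nonneg ha (by linarith : (0:ℝ) ≤ t - u),
      mul_nonneg hb (by linarith : (0:ℝ) ≤ s - u),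
      mul_pos (sub_pos.2 hus) (hu.trans (hus.trans_le hst))]
  rcases lt_or_ge t u with htu | hut
  · rw [max_eq_right hsu, max_eq_left htu.le] at h
    nlinarith [mul_pos hu (sub_pos.2 htu)]
  rw [max_eq_right hsu, max_eq_right hut] at h
  have hsum : a * b + a * (t - u) + (a + b - c) * u = 0 := by linear_combination -h
  have hatu : 0 ≤ a * (t - u) := mul_nonneg ha (sub_nonneg.2 hut)
  replace hab : a * b = 0 := by linarith
  replace hatu : a * (t - u) = 0 := by linarith
  refine ⟨hsu, hut, ?_⟩
  rcases eq_or_ne a 0 with ha0 | ha0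
  · exact .inl ha0
  · exact .inr ⟨(mul_eq_zero.1 hab).resolve_left ha0,
      (sub_eq_zero.1 ((mul_eq_zero.1 hatu).resolve_left ha0)).symm⟩

theorem BS_eq_BS_add_BS_iff {Y : Type*} [MetricSpace Y] {x y z : Y × ℝ}
    (hx : 0 < x.2) (hy : 0 < y.2) (hz : 0 < z.2) :
    BS x y = BS x z + BS z y ↔
      (dist x.1 y.1 + max x.2 y.2) * z.2 =
        (dist x.1 z.1 + max x.2 z.2) * (dist z.1 y.1 + max z.2 y.2) := by
  obtain ⟨p, s⟩ := x
  obtain ⟨r, u⟩ := z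
  obtain ⟨q, t⟩ := y
  dsimp only at hx hy hz ⊢
  have hsqrt : √(s * u) * √(u * t) = u * √(s * t) := by
    rw [← Real.sqrt_mul (by positivity), show s * u * (u * t) = (u * u) * (s * t) by ring,
      Real.sqrt_mul (by positivity), Real.sqrt_mul_self hz.le]
  have hst : 0 < √(s * t) := by positivity
  have hxz : 0 < (dist p r + max s u) / √(s * u) := by positivity
  have hzy : 0 < (dist r q + max u t) / √(u * t) := by positivity
  rw [BS, BS, BS, ← mul_add, ← Real.log_mul hxz.ne' hzy.ne', mul_right_inj' two_ne_zero,
    Real.log_injOn_pos.eq_iff (mem_Ioi.2 (by positivity)) (mem_Ioi.2 (mul_pos hxz hzy)),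
    div_mul_div_comm, hsqrt, div_eq_div_iff hst.ne' (by positivity), ← mul_assoc,
    mul_left_inj' hst.ne']

theorem stmt15_general {Y : Type*} [MetricSpace Y] (p q r : Y) {s t u : ℝ}
    (hs : 0 < s) (hu : 0 < u) (hst : s ≤ t)
    (hzy : (r, u) ≠ (q, t)) :
    BS (p, s) (q, t) = BS (p, s) (r, u) + BS (r, u) (q, t) ↔
      (s ≤ u ∧ u ≤ t ∧ r = p) := by
  rw [BS_eq_BS_add_BS_iff hs (hs.trans_le hst) hu]
  dsimp only
  rw [max_eq_right hst]
  constructor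
  · intro h
    obtain ⟨hsu, hut, hrp | ⟨hrq, rfl⟩⟩ :=
      le_le_and_of_mul_eq_add_max_mul_add_max dist_nonneg dist_nonneg (dist_triangle p r q) hu hst h
    · exact ⟨hsu, hut, (dist_eq_zero.1 hrp).symm⟩
    · exact absurd (by rw [dist_eq_zero.1 hrq]) hzy
  · rintro ⟨hsu, hut, rfl⟩
    rw [max_eq_right hsu, max_eq_right hut, dist_self]
    ring

/-- equality case in the triangle inequality for the
Balogh–Schramm distance: for `x = (p,s)`, `y = (q,t)`, `z = (r,u)` with `s ≤ t`
and `z ∉ {x, y}`, one has `ρ(x,y) = ρ(x,z) + ρ(z,y)` iff `s ≤ u ≤ t` and `r = p`. -/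
theorem stmt15 {Y : Type*} [MetricSpace Y] (p q r : Y) {s t u : ℝ}
    (hs : 0 < s) (ht : 0 < t) (hu : 0 < u) (hst : s ≤ t)
    (hzx : (r, u) ≠ (p, s)) (hzy : (r, u) ≠ (q, t)) :
    BS (p, s) (q, t) = BS (p, s) (r, u) + BS (r, u) (q, t) ↔
      (s ≤ u ∧ u ≤ t ∧ r = p) :=
  stmt15_general p q r hs hu hst hzy
end
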